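/- arXiv:2206.10784 — 3 statements merged into one kernel-verified Lean document; each statement's English description precedes it below -/
import Mathlib

section
/- Let q be a positive integer, F : (Fin q → ℝ) → ℝ, w ∈ ℝ^q, g ∈ ℝ^q, and L ∈ ℝ^q with nonnegative entries such that for every w' ∈ ℝ^q, |F(w') − F(w) − ⟨g, w' − w⟩| ≤ (1/2)·Σᵢ Lᵢ·(w'ᵢ − wᵢ)². Then for every η > 0 and every v ∈ ℝ^q with vᵢ ∈ {−1, +1} for all i, F(w − η·v) ≤ F(w) − η·Σᵢ |gᵢ| + 2η·Σᵢ |gᵢ|·𝟙[vᵢ ≠ sign(gᵢ)] + (η²/2)·Σᵢ Lᵢ, where sign(x) = 1 for x ≥ 0 and sign(x) = −1 for x < 0, and 𝟙[·] is the indicator function. -/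
open Finset in
/-- the sign-mismatch form of the descent step: the descent `−η·Σᵢ |gᵢ|` is
degraded by `2η|gᵢ|` exactly at the coordinates where `v` disagrees with `sign(gᵢ)`,
where `sign(x) = 1` for `x ≥ 0` and `sign(x) = −1` for `x < 0`. -/
theorem stmt_2 (q : ℕ) (hq : 0 < q) (F : (Fin q → ℝ) → ℝ) (w g L : Fin q → ℝ)
    (hL : ∀ i, 0 ≤ L i)
    (hsmooth : ∀ w' : Fin q → ℝ,
      |F w' - F w - ∑ i, g i * (w' i - w i)| ≤ (1 / 2) * ∑ i, L i * (w' i - w i) ^ 2)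
    (η : ℝ) (hη : 0 < η) (v : Fin q → ℝ) (hv : ∀ i, v i = -1 ∨ v i = 1) :
    F (fun i => w i - η * v i) ≤
      F w - η * ∑ i, |g i|
        + 2 * η * ∑ i, |g i| * (if v i ≠ (if 0 ≤ g i then (1 : ℝ) else -1) then 1 else 0)
        + (η ^ 2 / 2) * ∑ i, L i := by
  have h := hsmooth (fun i => w i - η * v i)
  have h1 : F (fun i => w i - η * v i) ≤
      F w + ∑ i, g i * (-(η * v i)) + (1 / 2) * ∑ i, L i * (-(η * v i)) ^ 2 := by
    have := (abs_le.mp h).2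
    simp only [sub_sub_cancel_left] at this ⊢
    linarith
  have hterm : ∀ i, -(g i * v i) ≤
      -|g i| + 2 * (|g i| * (if v i ≠ (if 0 ≤ g i then (1 : ℝ) else -1) then 1 else 0)) := by
    intro i
    by_cases hg : 0 ≤ g i
    · rw [abs_of_nonneg hg]
      rcases hv i with hvi | hvi <;> simp [hvi, hg] <;> norm_num <;> linarith
    · rw [abs_of_neg (lt_of_not_ge hg)]
      rcases hv i with hvi | hvi <;> simp [hvi, hg] <;> norm_num <;> linarith
  calc F (fun i => w i - η * v i) ≤
      F w + ∑ i, g i * (-(η * v i)) + (1 / 2) * ∑ i, L i * (-(η * v i)) ^ 2 := h1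
    _ ≤ F w - η * ∑ i, |g i|
        + 2 * η * ∑ i, |g i| * (if v i ≠ (if 0 ≤ g i then (1 : ℝ) else -1) then 1 else 0)
        + (η ^ 2 / 2) * ∑ i, L i := by
        have h2 : ∑ i, g i * (-(η * v i)) ≤
            η * ∑ i, (-|g i| + 2 * (|g i| * (if v i ≠ (if 0 ≤ g i then (1 : ℝ) else -1) then 1 else 0))) := by
          rw [Finset.mul_sum]
          apply Finset.sum_le_sum
          intro i _
          have := hterm i
          have h3 : g i * (-(η * v i)) = η * (-(g i * v i)) := by ring
          rw [h3]
          exact mul_le_mul_of_nonneg_left this hη.le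
        have h4 : (1 / 2 : ℝ) * ∑ i, L i * (-(η * v i)) ^ 2 = (η ^ 2 / 2) * ∑ i, L i := by
          rw [Finset.mul_sum, Finset.mul_sum]
          apply Finset.sum_congr rfl
          intro i _
          rcases hv i with hvi | hvi <;> rw [hvi] <;> ring
        have h5 : ∑ i, η * (-|g i| + 2 * (|g i| * (if v i ≠ (if 0 ≤ g i then (1 : ℝ) else -1) then 1 else 0)))
            = -(η * ∑ i, |g i|) + 2 * η * ∑ i, |g i| * (if v i ≠ (if 0 ≤ g i then (1 : ℝ) else -1) then 1 else 0) := by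
          rw [Finset.mul_sum, Finset.mul_sum, ← Finset.sum_neg_distrib, ← Finset.sum_add_distrib]
          exact Finset.sum_congr rfl fun i _ => by ring
        rw [Finset.mul_sum] at h2; rw [h5] at h2
        linarith [h2, h4]
end

section
/- Let N and m be positive integers and let x₁, …, x_m : Fin N → ℂ be pairwise orthogonal sequences (i.e., Σ_t x_j(t)·conj(x_l(t)) = 0 for j ≠ l) such that |x_j(t)| = 1 for all j and all t. Let s = x₁ + ⋯ + x_m. Then the peak-to-mean-envelope-power ratio of s satisfies max_t |s(t)|² ≤ m · ((1/N)·Σ_t |s(t)|²); equivalently, since (1/N)·Σ_t |s(t)|² = m, the PMEPR max_t |s(t)|² / ((1/N)·Σ_t |s(t)|²) is at most m. -/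
/-! The peak bound is the triangle inequality, `|s(t)| ≤ m`, while the mean power is exactly `m`
by Pythagoras: orthogonality kills the cross terms of `∑_t |∑_j x_j(t)|²`. -/

open Finset

theorem sum_norm_sq_sum_eq_of_orthogonal {𝕜 ι τ : Type*} [RCLike 𝕜] [Fintype ι] [Fintype τ]
    (x : ι → τ → 𝕜) (horth : ∀ j l, j ≠ l → ∑ t, x j t * starRingEnd 𝕜 (x l t) = 0) :
    ∑ t, ‖∑ j, x j t‖ ^ 2 = ∑ j, ∑ t, ‖x j t‖ ^ 2 := by
  apply RCLike.ofReal_injective (K := 𝕜)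
  push_cast
  simp_rw [← RCLike.mul_conj, map_sum, sum_mul, mul_sum]
  rw [sum_comm]
  refine sum_congr rfl fun j _ => ?_
  rw [sum_comm, sum_eq_single j (fun l _ hl => horth j l hl.symm) (by simp)]

theorem norm_sum_le_card_of_norm_eq_one {ι E : Type*} [Fintype ι] [SeminormedAddCommGroup E]
    (x : ι → E) (hx : ∀ j, ‖x j‖ = 1) : ‖∑ j, x j‖ ≤ Fintype.card ι := by
  simpa [hx] using norm_sum_le univ x

open Finset Complex in
theorem stmt_5_general (N m : ℕ) (hN : 0 < N)
    (x : Fin m → Fin N → ℂ)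
    (horth : ∀ j l, j ≠ l → ∑ t, x j t * (starRingEnd ℂ) (x l t) = 0)
    (hmod : ∀ j t, ‖x j t‖ = 1)
    (s : Fin N → ℂ) (hs : s = fun t => ∑ j, x j t) :
    (∀ t, ‖s t‖ ^ 2 ≤ m * ((1 / N : ℝ) * ∑ t', ‖s t'‖ ^ 2)) ∧
      (1 / N : ℝ) * ∑ t', ‖s t'‖ ^ 2 = m := by
  subst hs
  have hmean : (1 / N : ℝ) * ∑ t, ‖∑ j, x j t‖ ^ 2 = m := by
    rw [sum_norm_sq_sum_eq_of_orthogonal x horth]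
    simp only [hmod, one_pow, sum_const, card_univ, Fintype.card_fin, nsmul_eq_mul, mul_one]
    field_simp
  refine ⟨fun t => ?_, hmean⟩
  rw [hmean, ← sq]
  have hpeak := norm_sum_le_card_of_norm_eq_one (fun j => x j t) (fun j => hmod j t)
  rw [Fintype.card_fin] at hpeak
  exact pow_le_pow_left₀ (norm_nonneg _) hpeak 2

open Finset Complex in
/-- the sum `s` of `m` pairwise-orthogonal unit-modulus sequences of length `N`
has peak power at most `m` times its mean power; since the mean power equals `m`, the
PMEPR is at most `m`. -/
theorem stmt_5 (N m : ℕ) (hN : 0 < N) (hm : 0 < m)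
    (x : Fin m → Fin N → ℂ)
    (horth : ∀ j l, j ≠ l → ∑ t, x j t * (starRingEnd ℂ) (x l t) = 0)
    (hmod : ∀ j t, ‖x j t‖ = 1)
    (s : Fin N → ℂ) (hs : s = fun t => ∑ j, x j t) :
    (∀ t, ‖s t‖ ^ 2 ≤ m * ((1 / N : ℝ) * ∑ t', ‖s t'‖ ^ 2)) ∧
      (1 / N : ℝ) * ∑ t', ‖s t'‖ ^ 2 = m :=
  stmt_5_general N m hN x horth hmod s hs
end

section
/- Let q be a positive integer, F : (Fin q → ℝ) → ℝ, w ∈ ℝ^q, g ∈ ℝ^q, and L ∈ ℝ^q with nonnegative entries such that for every w' ∈ ℝ^q, |F(w') − F(w) − ⟨g, w' − w⟩| ≤ (1/2)·Σᵢ Lᵢ·(w'ᵢ − wᵢ)². Let η > 0 and let V be a random vector on a probability space taking values in {−1, +1}^q (measurable), and suppose there are p₁, …, p_q ∈ [0, 1] with P[Vᵢ ≠ sign(gᵢ)] ≤ pᵢ for each i, where sign(x) = 1 for x ≥ 0 and sign(x) = −1 for x < 0. Then E[F(w − η·V)] ≤ F(w) − η·Σᵢ |gᵢ|·(1 − 2pᵢ)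 + (η²/2)·Σᵢ Lᵢ. -/
/-!
Since every `Vᵢ² = 1`, the upper half of the smoothness bound at `w - η V` gives pointwise
`F (w - η V) ≤ F w - η ⟨g, V⟩ + η²/2 ∑ Lᵢ`, and integrating reduces the claim to
`|gᵢ| (1 - 2 pᵢ) ≤ gᵢ E[Vᵢ]`. Writing `gᵢ = |gᵢ| sᵢ` with `sᵢ = sign gᵢ`, this follows from
`sᵢ Vᵢ = 1 - 2·1{Vᵢ ≠ sᵢ}`, i.e. `sᵢ E[Vᵢ] = 1 - 2 P[Vᵢ ≠ sᵢ]`. Integrability of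
`F (w - η V)`, for arbitrary `F`, comes from `V` taking only finitely many values.
-/

open Finset MeasureTheory ProbabilityTheory

lemma integrable_comp_of_forall_mem_finite {Ω β E : Type*} [MeasurableSpace Ω]
    [MeasurableSpace β] [MeasurableSingletonClass β] [NormedAddCommGroup E]
    {μ : Measure Ω} [IsFiniteMeasure μ] {X : Ω → β} (hX : Measurable X) {s : Set β}
    (hs : s.Finite) (hXs : ∀ ω, X ω ∈ s) (f : β → E) :
    Integrable (fun ω => f (X ω)) μ := by
  have := hs.to_subtype
  have hf : Integrable (s.domRestrict f) (μ.map (s.codRestrict X hXs)) := .of_finite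
  exact hf.comp_measurable hX.subtype_mk

lemma apply_sub_mul_le_of_sq_eq_one {ι : Type*} [Fintype ι] {F : (ι → ℝ) → ℝ} {w g L : ι → ℝ}
    (hsmooth : ∀ w' : ι → ℝ,
      F w' ≤ F w + ∑ i, g i * (w' i - w i) + (1 / 2) * ∑ i, L i * (w' i - w i) ^ 2)
    (η : ℝ) {v : ι → ℝ} (hv : ∀ i, v i ^ 2 = 1) :
    F (fun i => w i - η * v i) ≤ F w - η * ∑ i, g i * v i + (η ^ 2 / 2) * ∑ i, L i := by
  have hlin : ∑ i, g i * ((w i - η * v i) - w i) = -(η * ∑ i, g i * v i) := by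
    rw [mul_sum, ← sum_neg_distrib]
    exact sum_congr rfl fun i _ => by ring
  have hquad : ∑ i, L i * ((w i - η * v i) - w i) ^ 2 = η ^ 2 * ∑ i, L i := by
    rw [mul_sum]
    exact sum_congr rfl fun i _ => by linear_combination L i * η ^ 2 * hv i
  linarith [hsmooth fun i => w i - η * v i]

section SignVariable

variable {Ω : Type*} [MeasurableSpace Ω] {μ : Measure Ω} [IsProbabilityMeasure μ] {X : Ω → ℝ}

lemma mul_integral_eq_one_sub_two_mul_measureReal_ne (hX : Measurable X)
    (hXval : ∀ ω, X ω = -1 ∨ X ω = 1) {s : ℝ} (hs : s = -1 ∨ s = 1) :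
    s * ∫ ω, X ω ∂μ = 1 - 2 * μ.real {ω | X ω ≠ s} := by
  have hA : MeasurableSet {ω | X ω ≠ s} := (measurableSet_singleton s).compl.preimage hX
  have hpt : ∀ ω, s * X ω = 1 - 2 * {ω | X ω ≠ s}.indicator 1 ω := by
    intro ω
    by_cases h : X ω = s
    · rw [Set.indicator_of_notMem (by simpa using h), h]
      rcases hs with rfl | rfl <;> norm_num
    · rw [Set.indicator_of_mem h]
      rcases hXval ω with h' | h' <;> rcases hs with rfl | rfl <;> simp_all <;> norm_num
  rw [← integral_const_mul, integral_congr_ae (Filter.Eventually.of_forall hpt),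
    integral_sub (integrable_const _) (((integrable_const 1).indicator hA).const_mul 2),
    integral_const_mul, integral_indicator_one hA]
  simp

lemma abs_mul_one_sub_two_mul_le_mul_integral (hX : Measurable X)
    (hXval : ∀ ω, X ω = -1 ∨ X ω = 1) {g p : ℝ}
    (herr : μ.real {ω | X ω ≠ if 0 ≤ g then 1 else -1} ≤ p) :
    |g| * (1 - 2 * p) ≤ g * ∫ ω, X ω ∂μ := by
  set s : ℝ := if 0 ≤ g then 1 else -1
  have hs : s = -1 ∨ s = 1 := by by_cases h : 0 ≤ g <;> simp [s, h]
  have hgs : |g| * s = g := by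
    by_cases h : 0 ≤ g
    · simp [s, h, abs_of_nonneg h]
    · simp [s, h, abs_of_neg (not_le.mp h)]
  calc |g| * (1 - 2 * p) ≤ |g| * (1 - 2 * μ.real {ω | X ω ≠ s}) := by gcongr
    _ = g * ∫ ω, X ω ∂μ := by
      rw [← mul_integral_eq_one_sub_two_mul_measureReal_ne hX hXval hs, ← mul_assoc, hgs]

end SignVariable

open Finset MeasureTheory ProbabilityTheory in
theorem stmt_8_general {Ω : Type*} [MeasureSpace Ω] [IsProbabilityMeasure (ℙ : Measure Ω)]
    (q : ℕ) (F : (Fin q → ℝ) → ℝ) (w g L : Fin q → ℝ)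
    (hsmooth : ∀ w' : Fin q → ℝ,
      |F w' - F w - ∑ i, g i * (w' i - w i)| ≤ (1 / 2) * ∑ i, L i * (w' i - w i) ^ 2)
    (η : ℝ) (hη : 0 < η)
    (V : Ω → Fin q → ℝ) (hVmeas : Measurable V)
    (hVval : ∀ ω i, V ω i = -1 ∨ V ω i = 1)
    (p : Fin q → ℝ)
    (hperr : ∀ i,
      (ℙ {ω | V ω i ≠ (if 0 ≤ g i then (1 : ℝ) else -1)}).toReal ≤ p i) :
    ∫ ω, F (fun i => w i - η * V ω i) ≤
      F w - η * ∑ i, |g i| * (1 - 2 * p i) + (η ^ 2 / 2) * ∑ i, L i := by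
  have hVi_meas (i : Fin q) : Measurable fun ω => V ω i := (measurable_pi_apply i).comp hVmeas
  have hVi_int (i : Fin q) : Integrable (fun ω => V ω i) :=
    integrable_comp_of_forall_mem_finite (hVi_meas i) (s := {-1, 1}) (by simp) (hVval · i) id
  have hV_sq (ω : Ω) (i : Fin q) : V ω i ^ 2 = 1 := by rcases hVval ω i with h | h <;> simp [h]
  have hV_int : Integrable fun ω => F fun i => w i - η * V ω i :=
    integrable_comp_of_forall_mem_finite hVmeas (Set.Finite.pi fun _ => Set.toFinite {-1, 1})
      (fun ω => Set.mem_univ_pi.mpr (hVval ω)) fun v => F fun i => w i - η * v i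
  have hupper (w' : Fin q → ℝ) :
      F w' ≤ F w + ∑ i, g i * (w' i - w i) + (1 / 2) * ∑ i, L i * (w' i - w i) ^ 2 := by
    linarith [(abs_le.mp (hsmooth w')).2]
  have hdescent (ω : Ω) := apply_sub_mul_le_of_sq_eq_one hupper η (hV_sq ω)
  calc ∫ ω, F (fun i => w i - η * V ω i)
      ≤ ∫ ω, (F w - η * ∑ i, g i * V ω i + (η ^ 2 / 2) * ∑ i, L i) :=
        integral_mono hV_int (by fun_prop) hdescent
    _ = F w - η * ∑ i, g i * (∫ ω, V ω i) + (η ^ 2 / 2) * ∑ i, L i := by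
        rw [integral_add (by fun_prop) (integrable_const _), integral_sub (integrable_const _)
          (by fun_prop), integral_const_mul, integral_finsetSum _ fun i _ => by fun_prop]
        simp [integral_const_mul]
    _ ≤ F w - η * ∑ i, |g i| * (1 - 2 * p i) + (η ^ 2 / 2) * ∑ i, L i := by
        gcongr F w - η * ?_ + _
        exact sum_le_sum fun i _ =>
          abs_mul_one_sub_two_mul_le_mul_integral (hVi_meas i) (hVval · i) (hperr i)

open Finset MeasureTheory ProbabilityTheory in
/-- expected one-round descent bound when the random sign vector `V` (values
in `{−1,+1}^q`) disagrees with `sign(gᵢ)` with probability at most `pᵢ` per coordinate,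
where `sign(x) = 1` for `x ≥ 0` and `sign(x) = −1` for `x < 0`. -/
theorem stmt_8 {Ω : Type*} [MeasureSpace Ω] [IsProbabilityMeasure (ℙ : Measure Ω)]
    (q : ℕ) (hq : 0 < q) (F : (Fin q → ℝ) → ℝ) (w g L : Fin q → ℝ)
    (hL : ∀ i, 0 ≤ L i)
    (hsmooth : ∀ w' : Fin q → ℝ,
      |F w' - F w - ∑ i, g i * (w' i - w i)| ≤ (1 / 2) * ∑ i, L i * (w' i - w i) ^ 2)
    (η : ℝ) (hη : 0 < η)
    (V : Ω → Fin q → ℝ) (hVmeas : Measurable V)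
    (hVval : ∀ ω i, V ω i = -1 ∨ V ω i = 1)
    (p : Fin q → ℝ) (hp : ∀ i, p i ∈ Set.Icc (0 : ℝ) 1)
    (hperr : ∀ i,
      (ℙ {ω | V ω i ≠ (if 0 ≤ g i then (1 : ℝ) else -1)}).toReal ≤ p i) :
    ∫ ω, F (fun i => w i - η * V ω i) ≤
      F w - η * ∑ i, |g i| * (1 - 2 * p i) + (η ^ 2 / 2) * ∑ i, L i :=
  stmt_8_general q F w g L hsmooth η hη V hVmeas hVval p hperr
end
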